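/- For every finite simple graph G, the chromatic number satisfies χ(G) ≤ wd(G) + 1. -/

import Mathlib

open scoped Classical

namespace WeakDegeneracy

variable {V : Type} [Fintype V]

/-- `WRem G S f` means all vertices of `S` can be removed from `G` (restricted to `S`)
by a sequence of legal `Delete` and `DeleteSave` operations, starting from the
value function `f`.  Legality of a step requires the resulting function to be
nonnegative on the remaining vertices. -/
inductive WRem (G : SimpleGraph V) : Finset V → (V → ℤ) → Prop
  | empty (f : V → ℤ) : WRem G ∅ f
  | del {S : Finset V} {f : V → ℤ} (u : V) (hu : u ∈ S)
      (hleg : ∀ v ∈ S.erase u, 0 ≤ (if G.Adj u v then f v - 1 else f v))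
      (h : WRem G (S.erase u) (fun v => if G.Adj u v then f v - 1 else f v)) :
      WRem G S f
  | delSave {S : Finset V} {f : V → ℤ} (u w : V) (hu : u ∈ S) (hw : w ∈ S)
      (hadj : G.Adj u w) (hgt : f w < f u)
      (hleg : ∀ v ∈ S.erase u, 0 ≤ (if G.Adj u v ∧ v ≠ w then f v - 1 else f v))
      (h : WRem G (S.erase u) (fun v => if G.Adj u v ∧ v ≠ w then f v - 1 else f v)) :
      WRem G S f

/-- `G` is weakly `f`-degenerate: all vertices can be removed by legal operations. -/
def WeaklyFDegenerate (G : SimpleGraph V) (f : V → ℤ) : Prop :=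
  WRem G Finset.univ f

/-- `G` is weakly `d`-degenerate: weakly `f`-degenerate for the constant function `d`. -/
def WeaklyDegenerate (G : SimpleGraph V) (d : ℕ) : Prop :=
  WeaklyFDegenerate G (fun _ => (d : ℤ))

/-- The weak degeneracy of `G`: the least `d` such that `G` is weakly `d`-degenerate. -/
noncomputable def weakDeg (G : SimpleGraph V) : ℕ :=
  sInf {d : ℕ | WeaklyDegenerate G d}

/-! Run a removal sequence backwards, colouring each vertex `u` when it is put back, from lists
with `f v < #(L v)`. Removing `u` with colour `α` deletes `α` from the lists of its neighbours,
which is paid for by the drop of `f` there. For `DeleteSave u w`, the neighbour `w` keeps its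
value, so `α` is taken outside `L w` if possible; otherwise `L u ⊆ L w` and
`#(L w) ≥ #(L u) > f u > f w`, so `w` can spare a colour. Every graph on `n` vertices is weakly
`n`-degenerate, so `weakDeg` is attained. -/

open Finset

omit [Fintype V] in
theorem WRem.of_forall_card_sub_one_le {G : SimpleGraph V} {S : Finset V} {f : V → ℤ}
    (hf : ∀ v ∈ S, (#S : ℤ) - 1 ≤ f v) : WRem G S f := by
  induction S using Finset.induction_on generalizing f with
  | empty => exact .empty f
  | @insert a s ha ih =>
    have key : ∀ v ∈ s, (#s : ℤ) - 1 ≤ if G.Adj a v then f v - 1 else f v := fun v hv => by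
      have := hf v (mem_insert_of_mem hv)
      rw [card_insert_of_notMem ha] at this
      split_ifs <;> push_cast at this <;> linarith
    refine .del a (mem_insert_self a s) ?_ ?_ <;> rw [erase_insert ha]
    · intro v hv
      have := card_pos.2 ⟨v, hv⟩
      have := key v hv
      omega
    · exact ih key

theorem weaklyDegenerate_card (G : SimpleGraph V) : WeaklyDegenerate G (Fintype.card V) :=
  WRem.of_forall_card_sub_one_le (by simp)

theorem weaklyDegenerate_weakDeg (G : SimpleGraph V) : WeaklyDegenerate G (weakDeg G) :=
  Nat.sInf_mem (s := {d | WeaklyDegenerate G d}) ⟨_, weaklyDegenerate_card G⟩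

theorem lt_card_erase_of_lt {C : Type*} {s : Finset C} {n : ℤ} (h : n < #s) (a : C) :
    n - 1 < #(s.erase a) := by
  have := s.pred_card_le_card_erase (a := a)
  omega

def IsListColoringOn {C : Type*} (G : SimpleGraph V) (S : Finset V) (L : V → Finset C)
    (c : V → C) : Prop :=
  (∀ v ∈ S, c v ∈ L v) ∧ ∀ x ∈ S, ∀ y ∈ S, G.Adj x y → c x ≠ c y

omit [Fintype V] in
theorem IsListColoringOn.update {C : Type*} {G : SimpleGraph V} {S : Finset V}
    {L : V → Finset C} {c : V → C} {u : V} {α : C} (hα : α ∈ L u)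
    (hc : IsListColoringOn G (S.erase u) (fun v => if G.Adj u v then (L v).erase α else L v) c) :
    IsListColoringOn G S L (Function.update c u α) := by
  obtain ⟨hmem, hproper⟩ := hc
  have hmem' : ∀ v ∈ S, v ≠ u → c v ∈ L v := fun v hv hvu => by
    have : c v ∈ if G.Adj u v then (L v).erase α else L v := hmem v (mem_erase.2 ⟨hvu, hv⟩)
    split_ifs at this
    exacts [mem_of_mem_erase this, this]
  have havoid : ∀ v ∈ S, v ≠ u → G.Adj u v → c v ≠ α := fun v hv hvu huv => by
    have : c v ∈ if G.Adj u v then (L v).erase α else L v := hmem v (mem_erase.2 ⟨hvu, hv⟩)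
    rw [if_pos huv] at this
    exact ne_of_mem_erase this
  refine ⟨fun v hv => ?_, fun x hx y hy hxy => ?_⟩
  · rcases eq_or_ne v u with rfl | hvu
    · simpa
    · simpa [hvu] using hmem' v hv hvu
  rcases eq_or_ne x u with rfl | hxu
  · simpa [hxy.ne'] using (havoid y hy hxy.ne' hxy).symm
  rcases eq_or_ne y u with rfl | hyu
  · simpa [hxu] using havoid x hx hxu hxy.symm
  simpa [hxu, hyu] using hproper x (mem_erase.2 ⟨hxu, hx⟩) y (mem_erase.2 ⟨hyu, hy⟩) hxy

omit [Fintype V] in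
theorem WRem.exists_isListColoringOn {C : Type*} [Nonempty C] {G : SimpleGraph V}
    {S : Finset V} {f : V → ℤ} (h : WRem G S f) {L : V → Finset C} (hf : ∀ v ∈ S, 0 ≤ f v)
    (hL : ∀ v ∈ S, f v < #(L v)) : ∃ c, IsListColoringOn G S L c := by
  induction h generalizing L with
  | empty f => exact ⟨fun _ => Classical.arbitrary C, by simp [IsListColoringOn]⟩
  | @del S f u hu hleg _ ih =>
    obtain ⟨α, hα⟩ : (L u).Nonempty := card_pos.1 (by have := hf u hu; have := hL u hu; omega)
    obtain ⟨c, hc⟩ := ih (L := fun v => if G.Adj u v then (L v).erase α else L v) hleg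
      fun v hv => by
        beta_reduce
        split_ifs
        exacts [lt_card_erase_of_lt (hL v (mem_of_mem_erase hv)) α, hL v (mem_of_mem_erase hv)]
    exact ⟨_, hc.update hα⟩
  | @delSave S f u w hu hw hadj hgt hleg _ ih =>
    obtain ⟨α, hα, hαw⟩ : ∃ α ∈ L u, α ∈ L w → f w + 1 < #(L w) := by
      by_cases hsub : L u ⊆ L w
      · obtain ⟨α, hα⟩ : (L u).Nonempty :=
          card_pos.1 (by have := hf w hw; have := hL u hu; omega)
        have := card_le_card hsub
        exact ⟨α, hα, fun _ => by have := hL u hu; omega⟩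
      · obtain ⟨α, hα, hαw⟩ := not_subset.1 hsub
        exact ⟨α, hα, fun h => absurd h hαw⟩
    obtain ⟨c, hc⟩ := ih (L := fun v => if G.Adj u v then (L v).erase α else L v) hleg
      fun v hv => by
        beta_reduce
        have hv' := hL v (mem_of_mem_erase hv)
        rcases eq_or_ne v w with rfl | hvw
        · rw [if_neg fun h => h.2 rfl, if_pos hadj]
          by_cases hαv : α ∈ L v
          · have := card_erase_add_one hαv
            have := hαw hαv
            omega
          · rwa [erase_eq_of_notMem hαv]
        · simp only [hvw, ne_eq, not_false_eq_true, and_true]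
          split_ifs
          exacts [lt_card_erase_of_lt hv' α, hv']
    exact ⟨_, hc.update hα⟩

theorem WeaklyDegenerate.colorable {G : SimpleGraph V} {d : ℕ} (h : WeaklyDegenerate G d) :
    G.Colorable (d + 1) := by
  obtain ⟨c, -, hc⟩ := WRem.exists_isListColoringOn (C := Fin (d + 1)) h (L := fun _ => univ)
    (fun _ _ => by positivity) (fun _ _ => by simp)
  exact ⟨⟨c, fun hxy => hc _ (mem_univ _) _ (mem_univ _) hxy⟩⟩

/-- For every finite simple graph `G`, the chromatic number satisfies
`χ(G) ≤ wd(G) + 1`. -/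
theorem chromaticNumber_le_weakDeg_add_one {V : Type} [Fintype V] (G : SimpleGraph V) :
    G.chromaticNumber ≤ (weakDeg G : ℕ∞) + 1 := by
  exact_mod_cast (weaklyDegenerate_weakDeg G).colorable.chromaticNumber_le

end WeakDegeneracy
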